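/- Let λ be a nonzero real number. Suppose v¹, v³ : [0,L] → ℂ are C², v⁵ : [0,L] → ℂ is C¹ and twice continuously differentiable on [0,β] and on [β,L], all three vanish at x = 0 and x = L, and for all x ∈ (0,β) ∪ (β,L): λ² ρ₁ v¹ + k₁ (v¹′ + v³ + l v⁵)′ + l k₃ (v⁵′ − l v¹) = 0, λ² ρ₂ v³ + k₂ v³′′ − k₁ (v¹′ + v³ + l v⁵) = 0, and λ² ρ₁ v⁵ + k₃ (v⁵′ − l v¹)′ − l k₁ (v¹′ + v³ + l v⁵) − i λ a(x) v⁵ = 0 (′ denoting d/dx). Then v¹ ≡ 0, v³ ≡ 0 and v⁵ ≡ 0 on [0,L]. (This says the Bresse generator has no purely imaginary eigenvalues iλ, λ ≠ 0, which yields strong stability of the semigroup.) -/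

import Mathlib

/-!
With `S = v1' + v3 + l v5` and `N = v5' - l v1`, the flux
`F = λ Im (k₁ S conj v1 + k₂ v3' conj v3 + k₃ N conj v5)` satisfies `F' = λ² a |v5|² ≥ 0` by
the equations and vanishes at `0` and `L`, so `F' = 0`; as `a = a₀ > 0` on `(0, β)`, `v5 = 0`
there. The third equation then reduces to `k₁ v3 + (k₁ + k₃) v1' = 0` on `(0, β)`, which gives
`v1'(0) = 0` and, differentiated and inserted in the first, `k₃ v1'' = (λ² ρ₁ - l² k₃) v1`; by
uniqueness for this ODE `v1 = 0`, hence `v3 = 0` on `[0, β]`. All Cauchy data vanish at `β`, and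
on `(β, L)`, where `a = 0`, the system is a linear second-order ODE, so Grönwall's inequality
gives `v = 0` there.
-/

open Set Filter Topology ComplexConjugate

theorem Ioo_union_Ioo_subset_Ioo {a b c : ℝ} (hab : a ≤ b) (hbc : b ≤ c) :
    Ioo a b ∪ Ioo b c ⊆ Ioo a c :=
  union_subset (Ioo_subset_Ioo_right hbc) (Ioo_subset_Ioo_left hab)

section Calculus

variable {E : Type*} [NormedAddCommGroup E] [NormedSpace ℝ E] {a b : ℝ}

theorem eqOn_Icc_of_eqOn_Ioo {X : Type*} [TopologicalSpace X] [T2Space X] {f g : ℝ → X}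
    (hab : a < b) (hf : ContinuousOn f (Icc a b)) (hg : ContinuousOn g (Icc a b))
    (h : EqOn f g (Ioo a b)) : EqOn f g (Icc a b) :=
  h.of_subset_closure hf hg Ioo_subset_Icc_self (closure_Ioo hab.ne).superset

theorem Set.EqOn.hasDerivAt_zero {f : ℝ → E} {s : Set ℝ} {x : ℝ} (h : EqOn f 0 s)
    (hs : s ∈ 𝓝 x) : HasDerivAt f 0 x :=
  (hasDerivAt_const x (0 : E)).congr_of_eventuallyEq (h.eventuallyEq_of_mem hs)

theorem Set.EqOn.deriv_eqOn_zero {f : ℝ → E} {s : Set ℝ} (h : EqOn f 0 s) (hs : IsOpen s) :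
    EqOn (_root_.deriv f) 0 s := fun _ hx => (h.hasDerivAt_zero (hs.mem_nhds hx)).deriv

theorem ContDiffOn.hasDerivAt_of_mem_Ioo {f : ℝ → E} {n : WithTop ℕ∞} {x : ℝ}
    (hf : ContDiffOn ℝ n f (Icc a b)) (hn : n ≠ 0) (hx : x ∈ Ioo a b) :
    HasDerivAt f (deriv f x) x :=
  ((hf.contDiffAt (Icc_mem_nhds hx.1 hx.2)).differentiableAt hn).hasDerivAt

theorem ContDiffOn.hasDerivAt_deriv_of_mem_Ioo {f : ℝ → E} {x : ℝ}
    (hf : ContDiffOn ℝ 2 f (Icc a b)) (hx : x ∈ Ioo a b) :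
    HasDerivAt (deriv f) (deriv (deriv f) x) x := by
  have hd : ContDiffOn ℝ 1 (deriv f) (Ioo a b) :=
    (hf.mono Ioo_subset_Icc_self).deriv_of_isOpen isOpen_Ioo (by norm_num)
  exact ((hd.differentiableOn one_ne_zero).differentiableAt (isOpen_Ioo.mem_nhds hx)).hasDerivAt

theorem eqOn_zero_of_norm_deriv_le_mul_norm {f f' : ℝ → E} {K : ℝ}
    (hf : ContinuousOn f (Icc a b)) (hf' : ∀ x ∈ Ioo a b, HasDerivAt f (f' x) x)
    (bound : ∀ x ∈ Ioo a b, ‖f' x‖ ≤ K * ‖f x‖) (ha : f a = 0) : EqOn f 0 (Icc a b) := by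
  intro t ht
  rcases ht.1.eq_or_lt with rfl | hat
  · exact ha
  -- Mathlib's Grönwall bound needs a right derivative at `a`: apply it on `[s, b]`, let `s → a`.
  have hle : ∀ s ∈ Ioo a t, ‖f t‖ ≤ ‖f s‖ * Real.exp (K * (t - s)) := by
    intro s hs
    have hsb : ∀ x ∈ Ico s b, x ∈ Ioo a b := fun x hx => ⟨hs.1.trans_le hx.1, hx.2⟩
    have := norm_le_gronwallBound_of_norm_deriv_right_le (hf.mono (Icc_subset_Icc_left hs.1.le))
      (fun x hx => (hf' x (hsb x hx)).hasDerivWithinAt) le_rfl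
      (fun x hx => (bound x (hsb x hx)).trans_eq (add_zero _).symm) t ⟨hs.2.le, ht.2⟩
    rwa [gronwallBound_ε0] at this
  have hlim : Tendsto (fun s => ‖f s‖ * Real.exp (K * (t - s))) (𝓝[>] a) (𝓝 0) := by
    have hcont : ContinuousWithinAt (fun s => ‖f s‖ * Real.exp (K * (t - s))) (Icc a b) a :=
      (hf a ⟨le_rfl, hat.le.trans ht.2⟩).norm.mul (by fun_prop)
    simpa [ha] using (hcont.mono_of_mem_nhdsWithin (Icc_mem_nhdsGT (hat.trans_le ht.2))).tendsto
  refine norm_le_zero_iff.1 (ge_of_tendsto hlim ?_)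
  filter_upwards [Ioo_mem_nhdsGT hat] with s hs using hle s hs

theorem eqOn_zero_of_linear_second_order_ode {u u' : ℝ → E} (A : E × E →L[ℝ] E)
    (hu : ContinuousOn u (Icc a b)) (hu' : ContinuousOn u' (Icc a b))
    (hd : ∀ x ∈ Ioo a b, HasDerivAt u (u' x) x)
    (hdd : ∀ x ∈ Ioo a b, HasDerivAt u' (A (u x, u' x)) x)
    (ha : u a = 0) (ha' : u' a = 0) : EqOn u 0 (Icc a b) := by
  let B : E × E →L[ℝ] E × E := (ContinuousLinearMap.snd ℝ E E).prod A
  have hW := eqOn_zero_of_norm_deriv_le_mul_norm (f := fun x => (u x, u' x))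
    (f' := fun x => B (u x, u' x)) (hu.prodMk hu') (fun x hx => (hd x hx).prodMk (hdd x hx))
    (fun x _ => B.le_opNorm _) (by simp [ha, ha'])
  exact fun x hx => congrArg Prod.fst (hW hx)

theorem eq_zero_of_hasDerivAt_nonneg_of_left_eq_right {f f' : ℝ → ℝ} {c : ℝ}
    (hab : a ≤ b) (hbc : b ≤ c) (hf : ContinuousOn f (Icc a c))
    (hf' : ∀ x ∈ Ioo a b ∪ Ioo b c, HasDerivAt f (f' x) x)
    (hnonneg : ∀ x ∈ Ioo a b ∪ Ioo b c, 0 ≤ f' x) (hac : f a = f c) :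
    ∀ x ∈ Ioo a b ∪ Ioo b c, f' x = 0 := by
  have mono : ∀ p q, a ≤ p → q ≤ c → Ioo p q ⊆ Ioo a b ∪ Ioo b c → MonotoneOn f (Icc p q) := by
    intro p q hp hq hpq
    refine monotoneOn_of_deriv_nonneg (convex_Icc p q) (hf.mono (Icc_subset_Icc hp hq)) ?_ ?_ <;>
      rw [interior_Icc]
    · exact fun x hx => (hf' x (hpq hx)).differentiableAt.differentiableWithinAt
    · exact fun x hx => (hf' x (hpq hx)).deriv ▸ hnonneg x (hpq hx)
  have hmono : MonotoneOn f (Icc a c) := by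
    rw [← Icc_union_Icc_eq_Icc hab hbc]
    exact (mono a b le_rfl hbc subset_union_left).union_right
      (mono b c hab le_rfl subset_union_right) (isGreatest_Icc hab) (isLeast_Icc hbc)
  have hconst : EqOn f (fun _ => f a) (Icc a c) := fun x hx =>
    le_antisymm (hac ▸ hmono hx (right_mem_Icc.2 (hab.trans hbc)) hx.2)
      (hmono (left_mem_Icc.2 (hab.trans hbc)) hx hx.1)
  intro x hx
  have hxac : x ∈ Ioo a c := by
    rcases hx with hx | hx
    exacts [⟨hx.1, hx.2.trans_le hbc⟩, ⟨hab.trans_lt hx.1, hx.2⟩]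
  exact (hf' x hx).unique <| (hasDerivAt_const x (f a)).congr_of_eventuallyEq
    (hconst.eventuallyEq_of_mem (Icc_mem_nhds hxac.1 hxac.2))

theorem derivWithin_Icc_of_mem_Ioo {f : ℝ → E} {x : ℝ} (hx : x ∈ Ioo a b) :
    derivWithin f (Icc a b) x = deriv f x :=
  derivWithin_of_mem_nhds (Icc_mem_nhds hx.1 hx.2)

theorem hasDerivAt_derivWithin_Icc {f : ℝ → E} {f'' : E} {x : ℝ}
    (hf : HasDerivAt (deriv f) f'' x) (hx : x ∈ Ioo a b) :
    HasDerivAt (derivWithin f (Icc a b)) f'' x :=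
  hf.congr_of_eventuallyEq <| by
    filter_upwards [Ioo_mem_nhds hx.1 hx.2] with y hy using derivWithin_Icc_of_mem_Ioo hy

theorem derivWithin_Icc_eq_zero_of_eqOn_zero {f : ℝ → E} {c : ℝ} (hab : a < b) (hbc : b ≤ c)
    (hf' : ContinuousOn (derivWithin f (Icc a c)) (Icc a c)) (hf : EqOn f 0 (Icc a b)) :
    EqOn (derivWithin f (Icc a c)) 0 (Icc a b) := by
  refine eqOn_Icc_of_eqOn_Ioo hab (hf'.mono (Icc_subset_Icc_right hbc)) continuousOn_const
    fun x hx => ?_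
  rw [derivWithin_Icc_of_mem_Ioo ⟨hx.1, hx.2.trans_le hbc⟩]
  exact (hf.mono Ioo_subset_Icc_self).deriv_eqOn_zero isOpen_Ioo hx

end Calculus

def bresseFlux (k₁ k₂ k₃ l lam : ℝ) (v1 v3 v5 d1 d3 d5 : ℂ) : ℝ :=
  lam * ((k₁ : ℂ) * (d1 + v3 + l * v5) * conj v1 + (k₂ : ℂ) * d3 * conj v3
    + (k₃ : ℂ) * (d5 - l * v1) * conj v5).im

theorem hasDerivAt_bresseFlux {k₁ k₂ k₃ l lam x : ℝ} {v1 v3 v5 d1 d3 d5 : ℝ → ℂ}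
    {dd1 dd3 dd5 : ℂ} (h1 : HasDerivAt v1 (d1 x) x) (h3 : HasDerivAt v3 (d3 x) x)
    (h5 : HasDerivAt v5 (d5 x) x) (hd1 : HasDerivAt d1 dd1 x) (hd3 : HasDerivAt d3 dd3 x)
    (hd5 : HasDerivAt d5 dd5 x) :
    HasDerivAt (fun y => bresseFlux k₁ k₂ k₃ l lam (v1 y) (v3 y) (v5 y) (d1 y) (d3 y) (d5 y))
      (lam * ((k₁ : ℂ) * ((dd1 + d3 x + l * d5 x) * conj (v1 x)
          + (d1 x + v3 x + l * v5 x) * conj (d1 x))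
        + (k₂ : ℂ) * (dd3 * conj (v3 x) + d3 x * conj (d3 x))
        + (k₃ : ℂ) * ((dd5 - l * d1 x) * conj (v5 x) + (d5 x - l * v1 x) * conj (d5 x))).im) x := by
  have hS := (((hd1.add h3).add (h5.const_mul (l : ℂ))).const_mul (k₁ : ℂ)).mul h1.star
  have hM := (hd3.const_mul (k₂ : ℂ)).mul h3.star
  have hN := ((hd5.sub (h1.const_mul (l : ℂ))).const_mul (k₃ : ℂ)).mul h5.star
  have := (Complex.imCLM.hasFDerivAt.comp_hasDerivAt x ((hS.add hM).add hN)).const_mul lam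
  refine this.congr_deriv ?_
  simp only [Complex.imCLM_apply, Pi.add_apply, Pi.sub_apply, Complex.star_def]
  congr 2
  ring

theorem bresse_energy_identity {ρ₁ ρ₂ k₁ k₂ k₃ l lam a : ℝ}
    {v1 v3 v5 d1 d3 d5 dd1 dd3 dd5 : ℂ}
    (e1 : ((lam ^ 2 * ρ₁ : ℝ) : ℂ) * v1 + k₁ * (dd1 + d3 + l * d5)
      + ((l * k₃ : ℝ) : ℂ) * (d5 - l * v1) = 0)
    (e2 : ((lam ^ 2 * ρ₂ : ℝ) : ℂ) * v3 + k₂ * dd3 - k₁ * (d1 + v3 + l * v5) = 0)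
    (e3 : ((lam ^ 2 * ρ₁ : ℝ) : ℂ) * v5 + k₃ * (dd5 - l * d1)
      - ((l * k₁ : ℝ) : ℂ) * (d1 + v3 + l * v5) - Complex.I * lam * (a : ℂ) * v5 = 0) :
    lam * ((k₁ : ℂ) * ((dd1 + d3 + l * d5) * conj v1 + (d1 + v3 + l * v5) * conj d1)
      + (k₂ : ℂ) * (dd3 * conj v3 + d3 * conj d3)
      + (k₃ : ℂ) * ((dd5 - l * d1) * conj v5 + (d5 - l * v1) * conj d5)).im
      = lam ^ 2 * a * Complex.normSq v5 := by
  have key : (k₁ : ℂ) * ((dd1 + d3 + l * d5) * conj v1 + (d1 + v3 + l * v5) * conj d1)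
      + (k₂ : ℂ) * (dd3 * conj v3 + d3 * conj d3)
      + (k₃ : ℂ) * ((dd5 - l * d1) * conj v5 + (d5 - l * v1) * conj d5)
      = (k₁ * Complex.normSq (d1 + v3 + l * v5) + k₂ * Complex.normSq d3
          + k₃ * Complex.normSq (d5 - l * v1)
          - lam ^ 2 * (ρ₁ * (Complex.normSq v1 + Complex.normSq v5) + ρ₂ * Complex.normSq v3) : ℝ)
        + Complex.I * lam * a * Complex.normSq v5 := by
    simp only [Complex.ofReal_add, Complex.ofReal_sub, Complex.ofReal_mul, Complex.ofReal_pow,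
      ← Complex.mul_conj, map_add, map_sub, map_mul, Complex.conj_ofReal]
    push_cast at e1 e2 e3
    linear_combination conj v1 * e1 + conj v3 * e2 + conj v5 * e3
  rw [key, Complex.add_im, Complex.ofReal_im, zero_add]
  simp [Complex.mul_im]
  ring

/-- The Bresse system on `(β, L)`, where `a = 0`, solved for the second derivatives. -/
noncomputable def bresseAccel (ρ₁ ρ₂ k₁ k₂ k₃ l lam : ℝ) :
    (ℂ × ℂ × ℂ) × (ℂ × ℂ × ℂ) →L[ℝ] ℂ × ℂ × ℂ :=
  LinearMap.toContinuousLinearMap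
    { toFun := fun w =>
        ((((l ^ 2 * k₃ - lam ^ 2 * ρ₁ : ℝ) : ℂ) * w.1.1 - k₁ * w.2.2.1
            - ((l * (k₁ + k₃) : ℝ) : ℂ) * w.2.2.2) / k₁,
          (((k₁ - lam ^ 2 * ρ₂ : ℝ) : ℂ) * w.1.2.1 + k₁ * w.2.1
            + ((k₁ * l : ℝ) : ℂ) * w.1.2.2) / k₂,
          (((l * (k₁ + k₃) : ℝ) : ℂ) * w.2.1 + ((l * k₁ : ℝ) : ℂ) * w.1.2.1
            + ((l ^ 2 * k₁ - lam ^ 2 * ρ₁ : ℝ) : ℂ) * w.1.2.2) / k₃)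
      map_add' := fun w w' => by ext <;> simp <;> ring
      map_smul' := fun c w => by ext <;> simp <;> ring }

structure IsBresseEigenfunction (ρ₁ ρ₂ k₁ k₂ k₃ l L β a₀ lam : ℝ) (v1 v3 v5 : ℝ → ℂ) : Prop where
  contDiffOn_v1 : ContDiffOn ℝ 2 v1 (Icc 0 L)
  contDiffOn_v3 : ContDiffOn ℝ 2 v3 (Icc 0 L)
  contDiffOn_v5 : ContDiffOn ℝ 1 v5 (Icc 0 L)
  contDiffOn_v5_left : ContDiffOn ℝ 2 v5 (Icc 0 β)
  contDiffOn_v5_right : ContDiffOn ℝ 2 v5 (Icc β L)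
  boundary : v1 0 = 0 ∧ v1 L = 0 ∧ v3 0 = 0 ∧ v3 L = 0 ∧ v5 0 = 0 ∧ v5 L = 0
  eq1 : ∀ x ∈ Ioo (0 : ℝ) β ∪ Ioo β L,
    ((lam ^ 2 * ρ₁ : ℝ) : ℂ) * v1 x
      + (k₁ : ℂ) * deriv (fun y => deriv v1 y + v3 y + (l : ℂ) * v5 y) x
      + ((l * k₃ : ℝ) : ℂ) * (deriv v5 x - (l : ℂ) * v1 x) = 0
  eq2 : ∀ x ∈ Ioo (0 : ℝ) β ∪ Ioo β L,
    ((lam ^ 2 * ρ₂ : ℝ) : ℂ) * v3 x + (k₂ : ℂ) * deriv (deriv v3) x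
      - (k₁ : ℂ) * (deriv v1 x + v3 x + (l : ℂ) * v5 x) = 0
  eq3 : ∀ x ∈ Ioo (0 : ℝ) β ∪ Ioo β L,
    ((lam ^ 2 * ρ₁ : ℝ) : ℂ) * v5 x
      + (k₃ : ℂ) * deriv (fun y => deriv v5 y - (l : ℂ) * v1 y) x
      - ((l * k₁ : ℝ) : ℂ) * (deriv v1 x + v3 x + (l : ℂ) * v5 x)
      - Complex.I * (lam : ℂ) * ((if x < β then a₀ else 0 : ℝ) : ℂ) * v5 x = 0

namespace IsBresseEigenfunction

variable {ρ₁ ρ₂ k₁ k₂ k₃ l L β a₀ lam x : ℝ} {v1 v3 v5 : ℝ → ℂ}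

theorem hasDerivAt_deriv_v5 (h : IsBresseEigenfunction ρ₁ ρ₂ k₁ k₂ k₃ l L β a₀ lam v1 v3 v5)
    (hx : x ∈ Ioo 0 β ∪ Ioo β L) : HasDerivAt (deriv v5) (deriv (deriv v5) x) x :=
  hx.elim h.contDiffOn_v5_left.hasDerivAt_deriv_of_mem_Ioo
    h.contDiffOn_v5_right.hasDerivAt_deriv_of_mem_Ioo

theorem eq1_of_mem (h : IsBresseEigenfunction ρ₁ ρ₂ k₁ k₂ k₃ l L β a₀ lam v1 v3 v5)
    (hβ : 0 ≤ β) (hβL : β ≤ L) (hx : x ∈ Ioo 0 β ∪ Ioo β L) :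
    ((lam ^ 2 * ρ₁ : ℝ) : ℂ) * v1 x + k₁ * (deriv (deriv v1) x + deriv v3 x + l * deriv v5 x)
      + ((l * k₃ : ℝ) : ℂ) * (deriv v5 x - l * v1 x) = 0 := by
  have hx' := Ioo_union_Ioo_subset_Ioo hβ hβL hx
  have hS := ((h.contDiffOn_v1.hasDerivAt_deriv_of_mem_Ioo hx').add
    (h.contDiffOn_v3.hasDerivAt_of_mem_Ioo two_ne_zero hx')).add
    ((h.contDiffOn_v5.hasDerivAt_of_mem_Ioo one_ne_zero hx').const_mul (l : ℂ))
  rw [← hS.deriv]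
  exact h.eq1 x hx

theorem eq3_of_mem (h : IsBresseEigenfunction ρ₁ ρ₂ k₁ k₂ k₃ l L β a₀ lam v1 v3 v5)
    (hβ : 0 ≤ β) (hβL : β ≤ L) (hx : x ∈ Ioo 0 β ∪ Ioo β L) :
    ((lam ^ 2 * ρ₁ : ℝ) : ℂ) * v5 x + k₃ * (deriv (deriv v5) x - l * deriv v1 x)
      - ((l * k₁ : ℝ) : ℂ) * (deriv v1 x + v3 x + l * v5 x)
      - Complex.I * lam * ((if x < β then a₀ else 0 : ℝ) : ℂ) * v5 x = 0 := by
  have hx' := Ioo_union_Ioo_subset_Ioo hβ hβL hx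
  have hN := (h.hasDerivAt_deriv_v5 hx).sub
    ((h.contDiffOn_v1.hasDerivAt_of_mem_Ioo two_ne_zero hx').const_mul (l : ℂ))
  rw [← hN.deriv]
  exact h.eq3 x hx

theorem hasDerivAt_flux (h : IsBresseEigenfunction ρ₁ ρ₂ k₁ k₂ k₃ l L β a₀ lam v1 v3 v5)
    (hβ : 0 ≤ β) (hβL : β ≤ L) (hx : x ∈ Ioo 0 β ∪ Ioo β L) :
    HasDerivAt (fun y => bresseFlux k₁ k₂ k₃ l lam (v1 y) (v3 y) (v5 y)
        (deriv v1 y) (deriv v3 y) (deriv v5 y))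
      (lam ^ 2 * (if x < β then a₀ else 0) * Complex.normSq (v5 x)) x := by
  have hx' := Ioo_union_Ioo_subset_Ioo hβ hβL hx
  exact (hasDerivAt_bresseFlux (h.contDiffOn_v1.hasDerivAt_of_mem_Ioo two_ne_zero hx')
    (h.contDiffOn_v3.hasDerivAt_of_mem_Ioo two_ne_zero hx')
    (h.contDiffOn_v5.hasDerivAt_of_mem_Ioo one_ne_zero hx')
    (h.contDiffOn_v1.hasDerivAt_deriv_of_mem_Ioo hx')
    (h.contDiffOn_v3.hasDerivAt_deriv_of_mem_Ioo hx') (h.hasDerivAt_deriv_v5 hx)).congr_deriv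
    (bresse_energy_identity (h.eq1_of_mem hβ hβL hx) (h.eq2 x hx) (h.eq3_of_mem hβ hβL hx))

theorem v5_eqOn_zero_left (h : IsBresseEigenfunction ρ₁ ρ₂ k₁ k₂ k₃ l L β a₀ lam v1 v3 v5)
    (hβ : 0 < β) (hβL : β < L) (ha₀ : 0 < a₀) (hlam : lam ≠ 0) : EqOn v5 0 (Icc 0 β) := by
  have hL : 0 < L := hβ.trans hβL
  have hd : ∀ {v : ℝ → ℂ}, ContDiffOn ℝ 1 v (Icc 0 L) →
      ContinuousOn (derivWithin v (Icc 0 L)) (Icc 0 L) :=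
    fun hv => hv.continuousOn_derivWithin (uniqueDiffOn_Icc hL) le_rfl
  have hc1 := h.contDiffOn_v1.continuousOn
  have hc3 := h.contDiffOn_v3.continuousOn
  have hc5 := h.contDiffOn_v5.continuousOn
  have hd1 := hd (h.contDiffOn_v1.of_le one_le_two)
  have hd3 := hd (h.contDiffOn_v3.of_le one_le_two)
  have hd5 := hd h.contDiffOn_v5
  let F x := bresseFlux k₁ k₂ k₃ l lam (v1 x) (v3 x) (v5 x)
    (derivWithin v1 (Icc 0 L) x) (derivWithin v3 (Icc 0 L) x) (derivWithin v5 (Icc 0 L) x)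
  have hF : ContinuousOn F (Icc 0 L) := by
    unfold F bresseFlux
    fun_prop
  have hF' : ∀ x ∈ Ioo 0 β ∪ Ioo β L,
      HasDerivAt F (lam ^ 2 * (if x < β then a₀ else 0) * Complex.normSq (v5 x)) x := by
    intro x hx
    have hx' := Ioo_union_Ioo_subset_Ioo hβ.le hβL.le hx
    refine (h.hasDerivAt_flux hβ.le hβL.le hx).congr_of_eventuallyEq ?_
    filter_upwards [Ioo_mem_nhds hx'.1 hx'.2] with y hy
    simp only [F, derivWithin_Icc_of_mem_Ioo hy]
  have hF0 := eq_zero_of_hasDerivAt_nonneg_of_left_eq_right hβ.le hβL.le hF hF'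
    (fun x _ => mul_nonneg (mul_nonneg (sq_nonneg _) (by split_ifs <;> linarith))
      (Complex.normSq_nonneg _)) (by simp [F, bresseFlux, h.boundary])
  refine eqOn_Icc_of_eqOn_Ioo hβ (hc5.mono (Icc_subset_Icc_right hβL.le)) continuousOn_const
    fun x hx => ?_
  simpa [if_pos hx.2, hlam, ha₀.ne'] using hF0 x (Or.inl hx)

theorem shear_relation_left (h : IsBresseEigenfunction ρ₁ ρ₂ k₁ k₂ k₃ l L β a₀ lam v1 v3 v5)
    (hβ : 0 ≤ β) (hβL : β ≤ L) (hl : l ≠ 0) (h5 : EqOn v5 0 (Icc 0 β)) :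
    EqOn (fun x => (k₁ : ℂ) * v3 x + ((k₁ + k₃ : ℝ) : ℂ) * deriv v1 x) 0 (Ioo 0 β) := by
  intro x hx
  have h5' : EqOn v5 0 (Ioo 0 β) := h5.mono Ioo_subset_Icc_self
  have hdd5 := (h5'.deriv_eqOn_zero isOpen_Ioo).deriv_eqOn_zero isOpen_Ioo
  have e3 := h.eq3_of_mem hβ hβL (Or.inl hx)
  simp only [h5' hx, hdd5 hx, Pi.zero_apply] at e3
  have hl_mul : (l : ℂ) * (k₁ * v3 x + ((k₁ + k₃ : ℝ) : ℂ) * deriv v1 x) = 0 := by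
    push_cast at e3 ⊢
    linear_combination -e3
  exact (mul_eq_zero.1 hl_mul).resolve_left (Complex.ofReal_ne_zero.2 hl)

theorem deriv_deriv_v1_left (h : IsBresseEigenfunction ρ₁ ρ₂ k₁ k₂ k₃ l L β a₀ lam v1 v3 v5)
    (hβ : 0 ≤ β) (hβL : β ≤ L) (hl : l ≠ 0) (h5 : EqOn v5 0 (Icc 0 β)) (hx : x ∈ Ioo 0 β) :
    (k₃ : ℂ) * deriv (deriv v1) x = ((lam ^ 2 * ρ₁ - l ^ 2 * k₃ : ℝ) : ℂ) * v1 x := by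
  have hx' : x ∈ Ioo 0 L := ⟨hx.1, hx.2.trans_le hβL⟩
  have hR := ((h.contDiffOn_v3.hasDerivAt_of_mem_Ioo two_ne_zero hx').const_mul (k₁ : ℂ)).add
    ((h.contDiffOn_v1.hasDerivAt_deriv_of_mem_Ioo hx').const_mul ((k₁ + k₃ : ℝ) : ℂ))
  have hR0 := hR.unique
    ((h.shear_relation_left hβ hβL hl h5).hasDerivAt_zero (Ioo_mem_nhds hx.1 hx.2))
  have hd5 := (h5.mono Ioo_subset_Icc_self).deriv_eqOn_zero isOpen_Ioo hx
  have e1 := h.eq1_of_mem hβ hβL (Or.inl hx)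
  simp only [hd5, Pi.zero_apply] at e1
  push_cast at e1 hR0 ⊢
  linear_combination hR0 - e1

theorem v1_eqOn_zero_left (h : IsBresseEigenfunction ρ₁ ρ₂ k₁ k₂ k₃ l L β a₀ lam v1 v3 v5)
    (hβ : 0 < β) (hβL : β < L) (hk : k₁ + k₃ ≠ 0) (hk₃ : k₃ ≠ 0) (hl : l ≠ 0)
    (h5 : EqOn v5 0 (Icc 0 β)) : EqOn v1 0 (Icc 0 β) := by
  have hL : 0 < L := hβ.trans hβL
  have hsub : Icc 0 β ⊆ Icc 0 L := Icc_subset_Icc_right hβL.le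
  have hIoo : ∀ {x}, x ∈ Ioo 0 β → x ∈ Ioo 0 L := fun hx => ⟨hx.1, hx.2.trans hβL⟩
  have hc1 := h.contDiffOn_v1.continuousOn
  have hc3 := h.contDiffOn_v3.continuousOn
  have hd1 := h.contDiffOn_v1.continuousOn_derivWithin (uniqueDiffOn_Icc hL) one_le_two
  have hR : EqOn (fun x => (k₁ : ℂ) * v3 x + ((k₁ + k₃ : ℝ) : ℂ) * derivWithin v1 (Icc 0 L) x) 0
      (Icc 0 β) := by
    refine eqOn_Icc_of_eqOn_Ioo hβ (((continuousOn_const.mul hc3).add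
      (continuousOn_const.mul hd1)).mono hsub) continuousOn_const fun x hx => ?_
    simp only [derivWithin_Icc_of_mem_Ioo (hIoo hx)]
    exact h.shear_relation_left hβ.le hβL.le hl h5 hx
  have hd10 : derivWithin v1 (Icc 0 L) 0 = 0 := by
    simpa only [h.boundary.2.2.1, mul_zero, zero_add, Pi.zero_apply, mul_eq_zero,
      Complex.ofReal_eq_zero, hk, false_or] using hR (left_mem_Icc.2 hβ.le)
  refine eqOn_zero_of_linear_second_order_ode
    (((lam ^ 2 * ρ₁ - l ^ 2 * k₃) / k₃) • ContinuousLinearMap.fst ℝ ℂ ℂ)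
    (hc1.mono hsub) (hd1.mono hsub) (fun x hx => ?_) (fun x hx => ?_) h.boundary.1 hd10
  · rw [derivWithin_Icc_of_mem_Ioo (hIoo hx)]
    exact h.contDiffOn_v1.hasDerivAt_of_mem_Ioo two_ne_zero (hIoo hx)
  · refine (hasDerivAt_derivWithin_Icc (h.contDiffOn_v1.hasDerivAt_deriv_of_mem_Ioo (hIoo hx))
      (hIoo hx)).congr_deriv ?_
    have := h.deriv_deriv_v1_left hβ.le hβL.le hl h5 hx
    rw [smul_apply, ContinuousLinearMap.coe_fst', Complex.real_smul,
      Complex.ofReal_div, div_mul_eq_mul_div, eq_div_iff (Complex.ofReal_ne_zero.2 hk₃)]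
    linear_combination this

theorem v3_eqOn_zero_left (h : IsBresseEigenfunction ρ₁ ρ₂ k₁ k₂ k₃ l L β a₀ lam v1 v3 v5)
    (hβ : 0 < β) (hβL : β < L) (hk₁ : k₁ ≠ 0) (hl : l ≠ 0) (h1 : EqOn v1 0 (Icc 0 β))
    (h5 : EqOn v5 0 (Icc 0 β)) : EqOn v3 0 (Icc 0 β) := by
  refine eqOn_Icc_of_eqOn_Ioo hβ (h.contDiffOn_v3.continuousOn.mono (Icc_subset_Icc_right hβL.le))
    continuousOn_const fun x hx => ?_
  simpa only [(h1.mono Ioo_subset_Icc_self).deriv_eqOn_zero isOpen_Ioo hx, Pi.zero_apply,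
    mul_zero, add_zero, mul_eq_zero, Complex.ofReal_eq_zero, hk₁, false_or]
    using h.shear_relation_left hβ.le hβL.le hl h5 hx

theorem bresseAccel_apply (h : IsBresseEigenfunction ρ₁ ρ₂ k₁ k₂ k₃ l L β a₀ lam v1 v3 v5)
    (hβ : 0 ≤ β) (hk₁ : k₁ ≠ 0) (hk₂ : k₂ ≠ 0) (hk₃ : k₃ ≠ 0) (hx : x ∈ Ioo β L) :
    bresseAccel ρ₁ ρ₂ k₁ k₂ k₃ l lam ((v1 x, v3 x, v5 x), (deriv v1 x, deriv v3 x, deriv v5 x))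
      = (deriv (deriv v1) x, deriv (deriv v3) x, deriv (deriv v5) x) := by
  have hβL : β ≤ L := (hx.1.trans hx.2).le
  have e1 := h.eq1_of_mem hβ hβL (Or.inr hx)
  have e2 := h.eq2 x (Or.inr hx)
  have e3 := h.eq3_of_mem hβ hβL (Or.inr hx)
  rw [if_neg (not_lt.2 hx.1.le)] at e3
  simp only [bresseAccel, LinearMap.coe_toContinuousLinearMap', LinearMap.coe_mk, AddHom.coe_mk,
    Prod.mk.injEq]
  refine ⟨?_, ?_, ?_⟩
  · rw [div_eq_iff (Complex.ofReal_ne_zero.2 hk₁)]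
    push_cast at e1 ⊢
    linear_combination -e1
  · rw [div_eq_iff (Complex.ofReal_ne_zero.2 hk₂)]
    push_cast at e2 ⊢
    linear_combination -e2
  · rw [div_eq_iff (Complex.ofReal_ne_zero.2 hk₃)]
    push_cast at e3 ⊢
    linear_combination -e3

theorem eqOn_zero_right (h : IsBresseEigenfunction ρ₁ ρ₂ k₁ k₂ k₃ l L β a₀ lam v1 v3 v5)
    (hβ : 0 < β) (hβL : β < L) (hk₁ : k₁ ≠ 0) (hk₂ : k₂ ≠ 0) (hk₃ : k₃ ≠ 0)
    (h1 : EqOn v1 0 (Icc 0 β)) (h3 : EqOn v3 0 (Icc 0 β)) (h5 : EqOn v5 0 (Icc 0 β)) :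
    EqOn (fun x => (v1 x, v3 x, v5 x)) 0 (Icc β L) := by
  have hL : 0 < L := hβ.trans hβL
  have hsub : Icc β L ⊆ Icc 0 L := Icc_subset_Icc_left hβ.le
  have hIoo : ∀ {x}, x ∈ Ioo β L → x ∈ Ioo 0 L := fun hx => ⟨hβ.trans hx.1, hx.2⟩
  have hd1 := h.contDiffOn_v1.continuousOn_derivWithin (uniqueDiffOn_Icc hL) one_le_two
  have hd3 := h.contDiffOn_v3.continuousOn_derivWithin (uniqueDiffOn_Icc hL) one_le_two
  have hd5 := h.contDiffOn_v5.continuousOn_derivWithin (uniqueDiffOn_Icc hL) le_rfl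
  have hβmem : β ∈ Icc 0 β := right_mem_Icc.2 hβ.le
  refine eqOn_zero_of_linear_second_order_ode (bresseAccel ρ₁ ρ₂ k₁ k₂ k₃ l lam)
    (u' := fun x => (derivWithin v1 (Icc 0 L) x, derivWithin v3 (Icc 0 L) x,
      derivWithin v5 (Icc 0 L) x))
    ((h.contDiffOn_v1.continuousOn.prodMk (h.contDiffOn_v3.continuousOn.prodMk
      h.contDiffOn_v5.continuousOn)).mono hsub)
    ((hd1.prodMk (hd3.prodMk hd5)).mono hsub) (fun x hx => ?_) (fun x hx => ?_)
    (by simp [h1 hβmem, h3 hβmem, h5 hβmem])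
    (by simp [derivWithin_Icc_eq_zero_of_eqOn_zero hβ hβL.le hd1 h1 hβmem,
      derivWithin_Icc_eq_zero_of_eqOn_zero hβ hβL.le hd3 h3 hβmem,
      derivWithin_Icc_eq_zero_of_eqOn_zero hβ hβL.le hd5 h5 hβmem])
  · simp only [derivWithin_Icc_of_mem_Ioo (hIoo hx)]
    exact (h.contDiffOn_v1.hasDerivAt_of_mem_Ioo two_ne_zero (hIoo hx)).prodMk
      ((h.contDiffOn_v3.hasDerivAt_of_mem_Ioo two_ne_zero (hIoo hx)).prodMk
        (h.contDiffOn_v5.hasDerivAt_of_mem_Ioo one_ne_zero (hIoo hx)))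
  · simp only [derivWithin_Icc_of_mem_Ioo (hIoo hx), h.bresseAccel_apply hβ.le hk₁ hk₂ hk₃ hx]
    exact (hasDerivAt_derivWithin_Icc (h.contDiffOn_v1.hasDerivAt_deriv_of_mem_Ioo (hIoo hx))
      (hIoo hx)).prodMk ((hasDerivAt_derivWithin_Icc
        (h.contDiffOn_v3.hasDerivAt_deriv_of_mem_Ioo (hIoo hx)) (hIoo hx)).prodMk
      (hasDerivAt_derivWithin_Icc (h.hasDerivAt_deriv_v5 (Or.inr hx)) (hIoo hx)))

end IsBresseEigenfunction

theorem bresse_no_imaginary_eigenvalues_general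
    (ρ₁ ρ₂ k₁ k₂ k₃ l L β a₀ : ℝ)
    (hk1 : 0 < k₁) (hk2 : 0 < k₂) (hk3 : 0 < k₃)
    (hl : 0 < l) (ha0 : 0 < a₀) (hbeta : 0 < β) (hbetaL : β < L)
    (lam : ℝ) (hlam : lam ≠ 0)
    (v1 v3 v5 : ℝ → ℂ)
    (hv1 : ContDiffOn ℝ 2 v1 (Icc 0 L)) (hv3 : ContDiffOn ℝ 2 v3 (Icc 0 L))
    (hv5 : ContDiffOn ℝ 1 v5 (Icc 0 L))
    (hv5l : ContDiffOn ℝ 2 v5 (Icc 0 β)) (hv5r : ContDiffOn ℝ 2 v5 (Icc β L))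
    (hbc : v1 0 = 0 ∧ v1 L = 0 ∧ v3 0 = 0 ∧ v3 L = 0 ∧ v5 0 = 0 ∧ v5 L = 0)
    (heq1 : ∀ x ∈ Ioo (0 : ℝ) β ∪ Ioo β L,
      ((lam ^ 2 * ρ₁ : ℝ) : ℂ) * v1 x
        + (k₁ : ℂ) * deriv (fun y => deriv v1 y + v3 y + (l : ℂ) * v5 y) x
        + ((l * k₃ : ℝ) : ℂ) * (deriv v5 x - (l : ℂ) * v1 x) = 0)
    (heq2 : ∀ x ∈ Ioo (0 : ℝ) β ∪ Ioo β L,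
      ((lam ^ 2 * ρ₂ : ℝ) : ℂ) * v3 x + (k₂ : ℂ) * deriv (deriv v3) x
        - (k₁ : ℂ) * (deriv v1 x + v3 x + (l : ℂ) * v5 x) = 0)
    (heq3 : ∀ x ∈ Ioo (0 : ℝ) β ∪ Ioo β L,
      ((lam ^ 2 * ρ₁ : ℝ) : ℂ) * v5 x
        + (k₃ : ℂ) * deriv (fun y => deriv v5 y - (l : ℂ) * v1 y) x
        - ((l * k₁ : ℝ) : ℂ) * (deriv v1 x + v3 x + (l : ℂ) * v5 x)
        - Complex.I * (lam : ℂ) * ((if x < β then a₀ else 0 : ℝ) : ℂ) * v5 x = 0) :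
    ∀ x ∈ Icc (0 : ℝ) L, v1 x = 0 ∧ v3 x = 0 ∧ v5 x = 0 := by
  have h : IsBresseEigenfunction ρ₁ ρ₂ k₁ k₂ k₃ l L β a₀ lam v1 v3 v5 :=
    ⟨hv1, hv3, hv5, hv5l, hv5r, hbc, heq1, heq2, heq3⟩
  have h5 := h.v5_eqOn_zero_left hbeta hbetaL ha0 hlam
  have h1 := h.v1_eqOn_zero_left hbeta hbetaL (add_pos hk1 hk3).ne' hk3.ne' hl.ne' h5
  have h3 := h.v3_eqOn_zero_left hbeta hbetaL hk1.ne' hl.ne' h1 h5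
  have hright := h.eqOn_zero_right hbeta hbetaL hk1.ne' hk2.ne' hk3.ne' h1 h3 h5
  intro x hx
  rcases le_total x β with hxβ | hβx
  · exact ⟨h1 ⟨hx.1, hxβ⟩, h3 ⟨hx.1, hxβ⟩, h5 ⟨hx.1, hxβ⟩⟩
  · simpa using hright ⟨hβx, hx.2⟩

/-- The Bresse generator has no purely imaginary eigenvalues `iλ`, `λ ≠ 0`. -/
theorem bresse_no_imaginary_eigenvalues
    (ρ₁ ρ₂ k₁ k₂ k₃ l L β a₀ : ℝ)
    (hrho1 : 0 < ρ₁) (hrho2 : 0 < ρ₂) (hk1 : 0 < k₁) (hk2 : 0 < k₂) (hk3 : 0 < k₃)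
    (hl : 0 < l) (hL : 0 < L) (ha0 : 0 < a₀) (hbeta : 0 < β) (hbetaL : β < L)
    (lam : ℝ) (hlam : lam ≠ 0)
    (v1 v3 v5 : ℝ → ℂ)
    (hv1 : ContDiffOn ℝ 2 v1 (Icc 0 L)) (hv3 : ContDiffOn ℝ 2 v3 (Icc 0 L))
    (hv5 : ContDiffOn ℝ 1 v5 (Icc 0 L))
    (hv5l : ContDiffOn ℝ 2 v5 (Icc 0 β)) (hv5r : ContDiffOn ℝ 2 v5 (Icc β L))
    (hbc : v1 0 = 0 ∧ v1 L = 0 ∧ v3 0 = 0 ∧ v3 L = 0 ∧ v5 0 = 0 ∧ v5 L = 0)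
    (heq1 : ∀ x ∈ Ioo (0 : ℝ) β ∪ Ioo β L,
      ((lam ^ 2 * ρ₁ : ℝ) : ℂ) * v1 x
        + (k₁ : ℂ) * deriv (fun y => deriv v1 y + v3 y + (l : ℂ) * v5 y) x
        + ((l * k₃ : ℝ) : ℂ) * (deriv v5 x - (l : ℂ) * v1 x) = 0)
    (heq2 : ∀ x ∈ Ioo (0 : ℝ) β ∪ Ioo β L,
      ((lam ^ 2 * ρ₂ : ℝ) : ℂ) * v3 x + (k₂ : ℂ) * deriv (deriv v3) x
        - (k₁ : ℂ) * (deriv v1 x + v3 x + (l : ℂ) * v5 x) = 0)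
    (heq3 : ∀ x ∈ Ioo (0 : ℝ) β ∪ Ioo β L,
      ((lam ^ 2 * ρ₁ : ℝ) : ℂ) * v5 x
        + (k₃ : ℂ) * deriv (fun y => deriv v5 y - (l : ℂ) * v1 y) x
        - ((l * k₁ : ℝ) : ℂ) * (deriv v1 x + v3 x + (l : ℂ) * v5 x)
        - Complex.I * (lam : ℂ) * ((if x < β then a₀ else 0 : ℝ) : ℂ) * v5 x = 0) :
    ∀ x ∈ Icc (0 : ℝ) L, v1 x = 0 ∧ v3 x = 0 ∧ v5 x = 0 :=
  bresse_no_imaginary_eigenvalues_general ρ₁ ρ₂ k₁ k₂ k₃ l L β a₀ hk1 hk2 hk3 hl ha0 hbeta hbetaL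
    lam hlam v1 v3 v5 hv1 hv3 hv5 hv5l hv5r hbc heq1 heq2 heq3
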